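/- arXiv:2206.02065 — 2 statements merged into one kernel-verified Lean document; each statement's English description precedes it below -/
import Mathlib

section
/- In the exterior algebra on n generators over Q, the elements F_r = Σ_{|A|=r} θ_A (for r ≥ 0) pairwise commute: F_r F_s = F_s F_r for all r, s. -/
open ExteriorAlgebra

/-- The generator `θ_i` of the exterior algebra `Λ(ℚ^n)`. -/
noncomputable def theta (n : ℕ) (i : Fin n) : ExteriorAlgebra ℚ (Fin n → ℚ) :=
  ExteriorAlgebra.ι ℚ (Pi.single i (1 : ℚ))

/-- For `A = {a_1 < a_2 < ⋯ < a_k} ⊆ [n]`, the monomial `θ_A = θ_{a_1} θ_{a_2} ⋯ θ_{a_k}`. -/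
noncomputable def thetaA (n : ℕ) (A : Finset (Fin n)) : ExteriorAlgebra ℚ (Fin n → ℚ) :=
  ((A.sort (· ≤ ·)).map (theta n)).prod

/-- The fundamental quasisymmetric invariant `F_{1^r} = Σ_{A ⊆ [n], |A| = r} θ_A`. -/
noncomputable def Fq (n r : ℕ) : ExteriorAlgebra ℚ (Fin n → ℚ) :=
  ∑ A ∈ Finset.powersetCard r (Finset.univ : Finset (Fin n)), thetaA n A

/-! Homogeneous elements of degrees `r` and `s` satisfy `x y = (-1)^{rs} y x`, so only the case of
`r`, `s` both odd needs an argument, and there both products vanish. Indeed `F_1 = ι(∑ eᵢ)` squares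
to zero, and `F_{2m+1} = F_1 F_{2m}` with `F_{2m}` commuting with `F_1`, so
`F_{2a+1} F_{2b+1} = F_1 F_1 F_{2a} F_{2b} = 0`. The identity `F_{2m+1} = F_1 F_{2m}` is proved for
the partial sums over `A ⊆ S`, adding the generators to `S` in decreasing order. -/

section GradedCommutativity

variable {R M : Type*} [CommRing R] [AddCommGroup M] [Module R M]

theorem ι_mul_prod_map_ι (m : M) (l : List M) :
    ι R m * (l.map (ι R)).prod = (-1 : R) ^ l.length • ((l.map (ι R)).prod * ι R m) := by
  induction l with
  | nil => simp
  | cons a l ih =>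
    have hswap : ι R m * ι R a = -(ι R a * ι R m) :=
      eq_neg_of_add_eq_zero_left (ι_add_mul_swap m a)
    rw [List.map_cons, List.prod_cons, ← mul_assoc, hswap, neg_mul, mul_assoc, ih, mul_smul_comm,
      List.length_cons, pow_succ, mul_neg_one, neg_smul, mul_assoc]

theorem prod_map_ι_mul_prod_map_ι (l₁ l₂ : List M) :
    (l₁.map (ι R)).prod * (l₂.map (ι R)).prod
      = (-1 : R) ^ (l₁.length * l₂.length) • ((l₂.map (ι R)).prod * (l₁.map (ι R)).prod) := by
  induction l₁ with
  | nil => simp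
  | cons a l ih =>
    rw [List.map_cons, List.prod_cons, mul_assoc, ih, mul_smul_comm, ← mul_assoc,
      ι_mul_prod_map_ι, smul_mul_assoc, smul_smul, mul_assoc, List.length_cons, add_mul, one_mul,
      pow_add]

end GradedCommutativity

theorem thetaA_eq_prod_map_ι (n : ℕ) (A : Finset (Fin n)) :
    thetaA n A = (((A.sort (· ≤ ·)).map fun i => Pi.single i (1 : ℚ)).map (ι ℚ)).prod := by
  rw [thetaA, List.map_map]
  rfl

theorem thetaA_mul_thetaA (n : ℕ) (A B : Finset (Fin n)) :
    thetaA n A * thetaA n B = (-1 : ℚ) ^ (A.card * B.card) • (thetaA n B * thetaA n A) := by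
  simp only [thetaA_eq_prod_map_ι]
  rw [prod_map_ι_mul_prod_map_ι, List.length_map, List.length_map, Finset.length_sort,
    Finset.length_sort]

theorem Fq_mul_Fq_eq_neg_one_pow_smul (n r s : ℕ) :
    Fq n r * Fq n s = (-1 : ℚ) ^ (r * s) • (Fq n s * Fq n r) := by
  simp only [Fq, Finset.sum_mul_sum, Finset.smul_sum]
  rw [Finset.sum_comm]
  refine Finset.sum_congr rfl fun A hA => Finset.sum_congr rfl fun B hB => ?_
  rw [thetaA_mul_thetaA, (Finset.mem_powersetCard.1 hA).2, (Finset.mem_powersetCard.1 hB).2]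

theorem Fq_mul_comm_of_even (n : ℕ) {r s : ℕ} (h : Even (r * s)) :
    Fq n r * Fq n s = Fq n s * Fq n r := by
  rw [Fq_mul_Fq_eq_neg_one_pow_smul, h.neg_one_pow, one_smul]

noncomputable def FqOn (n : ℕ) (S : Finset (Fin n)) (r : ℕ) : ExteriorAlgebra ℚ (Fin n → ℚ) :=
  ∑ A ∈ S.powersetCard r, thetaA n A

theorem Fq_eq_FqOn_univ (n r : ℕ) : Fq n r = FqOn n Finset.univ r := rfl

theorem FqOn_zero (n : ℕ) (S : Finset (Fin n)) : FqOn n S 0 = 1 := by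
  simp [FqOn, thetaA]

theorem FqOn_one (n : ℕ) (S : Finset (Fin n)) :
    FqOn n S 1 = ι ℚ (∑ i ∈ S, Pi.single i (1 : ℚ)) := by
  simp [FqOn, Finset.powersetCard_one, thetaA, theta, map_sum]

theorem FqOn_one_mul_self (n : ℕ) (S : Finset (Fin n)) : FqOn n S 1 * FqOn n S 1 = 0 := by
  rw [FqOn_one, ι_sq_zero]

theorem FqOn_one_mul_theta (n : ℕ) (S : Finset (Fin n)) (a : Fin n) :
    FqOn n S 1 * theta n a = -(theta n a * FqOn n S 1) := by
  rw [FqOn_one, theta]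
  exact eq_neg_of_add_eq_zero_left (ι_add_mul_swap _ _)

theorem thetaA_insert_of_lt (n : ℕ) {a : Fin n} {A : Finset (Fin n)} (h : ∀ b ∈ A, a < b) :
    thetaA n (insert a A) = theta n a * thetaA n A := by
  rw [thetaA, Finset.sort_insert _ (fun b hb => (h b hb).le) (fun ha => lt_irrefl a (h a ha))]
  simp [thetaA]

theorem FqOn_insert_of_lt (n : ℕ) {a : Fin n} {S : Finset (Fin n)} (h : ∀ b ∈ S, a < b) (m : ℕ) :
    FqOn n (insert a S) (m + 1) = FqOn n S (m + 1) + theta n a * FqOn n S m := by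
  have ha : a ∉ S := fun ha => lt_irrefl a (h a ha)
  have hinj : Set.InjOn (insert a) (S.powersetCard m : Set (Finset (Fin n))) :=
    fun A hA B hB hAB => by
      rw [← Finset.erase_insert fun h' => ha ((Finset.mem_powersetCard.1 hA).1 h'),
        ← Finset.erase_insert fun h' => ha ((Finset.mem_powersetCard.1 hB).1 h'), hAB]
  have hdisj : Disjoint (S.powersetCard (m + 1)) ((S.powersetCard m).image (insert a)) := by
    refine Finset.disjoint_left.2 fun A hA hA' => ?_
    obtain ⟨B, -, rfl⟩ := Finset.mem_image.1 hA'
    exact ha ((Finset.mem_powersetCard.1 hA).1 (Finset.mem_insert_self a B))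
  rw [FqOn, Finset.powersetCard_succ_insert ha, Finset.sum_union hdisj, Finset.sum_image hinj,
    FqOn, FqOn, Finset.mul_sum]
  refine congrArg _ (Finset.sum_congr rfl fun A hA => thetaA_insert_of_lt n fun b hb => ?_)
  exact h b ((Finset.mem_powersetCard.1 hA).1 hb)

theorem FqOn_one_mul_even (n : ℕ) (S : Finset (Fin n)) (m : ℕ) :
    FqOn n S 1 * FqOn n S (2 * m) = FqOn n S (2 * m + 1) := by
  induction S using Finset.induction_on_min generalizing m with
  | empty =>
    rw [FqOn_one, Finset.sum_empty, map_zero, zero_mul, FqOn,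
      Finset.powersetCard_eq_empty.2 (by simp), Finset.sum_empty]
  | insert a S h ih =>
    rcases m with _ | m
    · rw [Nat.mul_zero, FqOn_zero, mul_one]
    have hx : FqOn n (insert a S) 1 = FqOn n S 1 + theta n a := by
      rw [FqOn_insert_of_lt n h 0, FqOn_zero, mul_one]
    rw [hx, show 2 * (m + 1) = 2 * m + 1 + 1 by ring, FqOn_insert_of_lt n h (2 * m + 1 + 1),
      FqOn_insert_of_lt n h (2 * m + 1)]
    have ih_succ := ih (m + 1)
    rw [show 2 * (m + 1) = 2 * m + 1 + 1 by ring] at ih_succ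
    set x := FqOn n S 1
    set t := theta n a
    have htt : t * t = 0 := ι_sq_zero _
    -- `x t F_{2m+1} = x t x F_{2m} = -t x x F_{2m}`, and `x x = 0`
    have hxtx : x * t * FqOn n S (2 * m + 1) = 0 := by
      rw [← ih m, FqOn_one_mul_theta, neg_mul, mul_assoc, ← mul_assoc x, FqOn_one_mul_self,
        zero_mul, mul_zero, neg_zero]
    calc (x + t) * (FqOn n S (2 * m + 1 + 1) + t * FqOn n S (2 * m + 1))
        = x * FqOn n S (2 * m + 1 + 1) + t * FqOn n S (2 * m + 1 + 1)
          + x * t * FqOn n S (2 * m + 1) + t * t * FqOn n S (2 * m + 1) := by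
          simp only [add_mul, mul_add, mul_assoc]; abel
      _ = FqOn n S (2 * m + 1 + 1 + 1) + t * FqOn n S (2 * m + 1 + 1) := by
          rw [hxtx, htt, zero_mul, add_zero, add_zero, ih_succ]

theorem Fq_mul_eq_zero_of_odd (n : ℕ) {r s : ℕ} (hr : Odd r) (hs : Odd s) :
    Fq n r * Fq n s = 0 := by
  obtain ⟨a, rfl⟩ := hr
  obtain ⟨b, rfl⟩ := hs
  have hodd (m : ℕ) : Fq n (2 * m + 1) = Fq n 1 * Fq n (2 * m) :=
    (FqOn_one_mul_even n Finset.univ m).symm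
  have hcomm : Fq n (2 * a) * Fq n 1 = Fq n 1 * Fq n (2 * a) :=
    Fq_mul_comm_of_even n ((even_two_mul a).mul_right 1)
  calc Fq n (2 * a + 1) * Fq n (2 * b + 1)
      = Fq n 1 * (Fq n (2 * a) * Fq n 1) * Fq n (2 * b) := by
        simp only [hodd, mul_assoc]
    _ = Fq n 1 * Fq n 1 * (Fq n (2 * a) * Fq n (2 * b)) := by
        simp only [hcomm, mul_assoc]
    _ = 0 := by
        rw [Fq_eq_FqOn_univ n 1, FqOn_one_mul_self, zero_mul]

/-- The elements `F_r` pairwise commute in the exterior algebra. -/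
theorem stmt4 (n r s : ℕ) : Fq n r * Fq n s = Fq n s * Fq n r := by
  by_cases h : Even (r * s)
  · exact Fq_mul_comm_of_even n h
  · obtain ⟨hr, hs⟩ := Nat.odd_mul.1 (Nat.not_even_iff_odd.1 h)
    rw [Fq_mul_eq_zero_of_odd n hr hs, Fq_mul_eq_zero_of_odd n hs hr]
end

section
/- In the exterior algebra on n generators (n ≥ 2), for each k ≥ 1 there exist nonzero rational constants a and a' such that a·F_{2k} = (F_2)^k and a'·F_{2k+1} = (F_2)^k · F_1. Consequently, the two-sided ideal generated by {F_r : 1 ≤ r ≤ n} equals the two-sided ideal generated by F_1 and F_2. -/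
open ExteriorAlgebra

/-!
Right multiplication of a monomial `θ_A` by `θ_i` gives `±θ_{A ∪ {i}}`, the sign counting the
elements of `A` above `i`. Collecting coefficients, `F_m F_1` and `F_m F_2` are multiples of
`F_{m+1}` and `F_{m+2}`; the multiples are the signed counts `∑_{i ∈ B} (-1)^#{b ∈ B | i < b}`,
which is `1` or `0` according to the parity of `#B`, and its analogue over pairs `p < q` in `B`,
which is `⌊#B / 2⌋`; both follow by adjoining a new maximum to `B`. Hence `F_2^k = k! F_{2k}` and
`F_2^k F_1 = k! F_{2k+1}`, so every `F_r` lies in the ideal generated by `F_1` and `F_2`.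
-/

open Finset
open scoped Nat

section Signs

variable {α R : Type*} [LinearOrder α] [Ring R]

lemma card_filter_lt_insert_of_lt {s : Finset α} {a x : α} (has : a ∉ s) (hx : x < a) :
    #{b ∈ insert a s | x < b} = #{b ∈ s | x < b} + 1 := by
  rw [filter_insert, if_pos hx, card_insert_of_notMem (fun h => has (mem_filter.mp h).1)]

lemma filter_lt_eq_empty_of_forall_lt {s : Finset α} {a : α} (ha : ∀ b ∈ s, b < a) :
    {b ∈ s | a < b} = ∅ :=
  filter_false_of_mem fun b hb => not_lt.mpr (ha b hb).le

lemma sum_neg_one_pow_card_filter_lt (C : Finset α) :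
    ∑ i ∈ C, (-1 : R) ^ #{b ∈ C | i < b} = if Even #C then 0 else 1 := by
  induction C using Finset.induction_on_max with
  | empty => simp
  | insert a s ha ih =>
    have has : a ∉ s := fun h => lt_irrefl a (ha a h)
    rw [sum_insert has, filter_insert, if_neg (lt_irrefl a), filter_lt_eq_empty_of_forall_lt ha,
      sum_congr rfl fun i hi => by rw [card_filter_lt_insert_of_lt has (ha i hi)]]
    simp only [card_empty, pow_zero, pow_succ, ← sum_mul, ih, card_insert_of_notMem has,
      Nat.even_add_one]
    split_ifs <;> simp

lemma sum_sum_neg_one_pow_card_filter_lt (C : Finset α) :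
    ∑ q ∈ C, ∑ p ∈ C with p < q, (-1 : R) ^ (#{b ∈ C | q < b} + #{b ∈ C.erase q | p < b})
      = (#C / 2 : ℕ) := by
  induction C using Finset.induction_on_max with
  | empty => simp
  | insert a s ha ih =>
    have has : a ∉ s := fun h => lt_irrefl a (ha a h)
    have top : ∑ p ∈ insert a s with p < a,
        (-1 : R) ^ (#{b ∈ insert a s | a < b} + #{b ∈ (insert a s).erase a | p < b})
        = ∑ p ∈ s, (-1 : R) ^ #{b ∈ s | p < b} := by
      have hlt : {p ∈ insert a s | p < a} = s := by
        rw [filter_insert, if_neg (lt_irrefl a), filter_true_of_mem ha]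
      rw [hlt, filter_insert, if_neg (lt_irrefl a), filter_lt_eq_empty_of_forall_lt ha,
        erase_insert has]
      simp
    have rest : ∀ q ∈ s, ∑ p ∈ insert a s with p < q,
        (-1 : R) ^ (#{b ∈ insert a s | q < b} + #{b ∈ (insert a s).erase q | p < b})
        = ∑ p ∈ s with p < q, (-1 : R) ^ (#{b ∈ s | q < b} + #{b ∈ s.erase q | p < b}) := by
      intro q hq
      have hqa := ha q hq
      rw [filter_insert, if_neg (not_lt.mpr hqa.le), card_filter_lt_insert_of_lt has hqa]
      refine sum_congr rfl fun p hp => ?_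
      rw [erase_insert_of_ne (ne_of_gt hqa), card_filter_lt_insert_of_lt
        (fun h => has (mem_of_mem_erase h)) ((mem_filter.mp hp).2.trans hqa),
        add_add_add_comm, pow_add _ _ (1 + 1), one_add_one_eq_two, neg_one_sq, mul_one]
    rw [sum_insert has, top, sum_congr rfl rest, ih, sum_neg_one_pow_card_filter_lt,
      card_insert_of_notMem has]
    rcases Nat.even_or_odd' #s with ⟨t, ht | ht⟩ <;> rw [ht]
    · rw [if_pos (even_two_mul t), zero_add, show (2 * t + 1) / 2 = 2 * t / 2 by omega]
    · rw [if_neg (Nat.not_even_two_mul_add_one t), show (2 * t + 1 + 1) / 2 = (2 * t + 1) / 2 + 1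
        by omega, Nat.cast_succ, add_comm]

end Signs

section ExteriorAlgebra

variable {n : ℕ}

lemma theta_mul_self (i : Fin n) : theta n i * theta n i = 0 := ι_sq_zero _

lemma theta_mul_theta_comm (i j : Fin n) : theta n i * theta n j = -(theta n j * theta n i) :=
  eq_neg_of_add_eq_zero_left (ι_add_mul_swap _ _)

lemma thetaA_insert_of_forall_lt {s : Finset (Fin n)} {a : Fin n} (h : ∀ b ∈ s, a < b) :
    thetaA n (insert a s) = theta n a * thetaA n s := by
  simp [thetaA, sort_insert _ (fun b hb => (h b hb).le) (fun ha => lt_irrefl a (h a ha))]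

lemma thetaA_mul_theta (A : Finset (Fin n)) (i : Fin n) :
    thetaA n A * theta n i
      = if i ∈ A then 0 else (-1 : ℚ) ^ #{a ∈ A | i < a} • thetaA n (insert i A) := by
  induction A using Finset.induction_on_min with
  | empty => simp [thetaA]
  | insert a s ha ih =>
    have has : a ∉ s := fun h => lt_irrefl a (ha a h)
    rw [thetaA_insert_of_forall_lt ha, mul_assoc, ih]
    by_cases his : i ∈ s
    · simp [his]
    rw [if_neg his, mul_smul_comm]
    rcases lt_trichotomy i a with hia | rfl | hai
    · have hi : ∀ b ∈ insert a s, i < b := by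
        simpa [hia] using fun b hb => hia.trans (ha b hb)
      rw [if_neg (by simp [his, hia.ne]), card_filter_lt_insert_of_lt has hia,
        thetaA_insert_of_forall_lt hi, thetaA_insert_of_forall_lt ha,
        thetaA_insert_of_forall_lt fun b hb => hia.trans (ha b hb), ← mul_assoc,
        theta_mul_theta_comm, neg_mul, mul_assoc, pow_succ, mul_neg_one, neg_smul, smul_neg]
    · rw [if_pos (mem_insert_self _ _), thetaA_insert_of_forall_lt ha, ← mul_assoc,
        theta_mul_self, zero_mul, smul_zero]
    · have ha' : ∀ b ∈ insert i s, a < b := by simpa [hai] using ha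
      rw [if_neg (by simp [his, hai.ne']), filter_insert, if_neg (not_lt.mpr hai.le),
        insert_comm, thetaA_insert_of_forall_lt ha']

noncomputable def thetaSum (n : ℕ) (f : Finset (Fin n) → ℚ) : ExteriorAlgebra ℚ (Fin n → ℚ) :=
  ∑ A, f A • thetaA n A

lemma smul_Fq_eq_thetaSum (r : ℕ) (c : ℚ) :
    c • Fq n r = thetaSum n fun A => if #A = r then c else 0 := by
  simp only [Fq, thetaSum, smul_sum, powersetCard_eq_filter, powerset_univ, sum_filter, smul_ite,
    ite_smul, smul_zero, zero_smul]

lemma sum_thetaSum {ι : Type*} (s : Finset ι) (f : ι → Finset (Fin n) → ℚ) :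
    ∑ j ∈ s, thetaSum n (f j) = thetaSum n fun A => ∑ j ∈ s, f j A := by
  simp only [thetaSum, sum_smul]
  exact sum_comm

lemma thetaSum_mul_theta (f : Finset (Fin n) → ℚ) (i : Fin n) :
    thetaSum n f * theta n i = thetaSum n fun B =>
      if i ∈ B then (-1) ^ #{b ∈ B | i < b} * f (B.erase i) else 0 := by
  let toggle : Finset (Fin n) → Finset (Fin n) := fun B => if i ∈ B then B.erase i else insert i B
  have htoggle : Function.Involutive toggle := fun B => by
    by_cases hi : i ∈ B <;> simp [toggle, hi]
  simp only [thetaSum, sum_mul, smul_mul_assoc, thetaA_mul_theta]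
  refine Fintype.sum_bijective toggle htoggle.bijective _ _ fun A => ?_
  by_cases hi : i ∈ A
  · simp [toggle, hi]
  · simp [toggle, hi, filter_insert, smul_smul, mul_comm]

lemma Fq_mul_sum_theta (m : ℕ) :
    Fq n m * ∑ i, theta n i = (if Even (m + 1) then (0 : ℚ) else 1) • Fq n (m + 1) := by
  rw [← one_smul ℚ (Fq n m), smul_Fq_eq_thetaSum, mul_sum]
  simp only [thetaSum_mul_theta]
  rw [sum_thetaSum, smul_Fq_eq_thetaSum]
  congr 1
  funext B
  rw [Fintype.sum_ite_mem]
  have hcard : ∀ i ∈ B, #(B.erase i) + 1 = #B := fun i hi => card_erase_add_one hi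
  by_cases hB : #B = m + 1
  · rw [if_pos hB, ← hB, ← sum_neg_one_pow_card_filter_lt]
    exact sum_congr rfl fun i hi => by rw [if_pos (by have := hcard i hi; omega), mul_one]
  · rw [if_neg hB]
    exact sum_eq_zero fun i hi => by rw [if_neg (by have := hcard i hi; omega), mul_zero]

lemma Fq_mul_sum_pairs (m : ℕ) :
    Fq n m * ∑ q, ∑ p ∈ Iio q, theta n p * theta n q
      = ((m + 2) / 2 : ℕ) • Fq n (m + 2) := by
  rw [← one_smul ℚ (Fq n m), smul_Fq_eq_thetaSum, ← Nat.cast_smul_eq_nsmul ℚ, smul_Fq_eq_thetaSum]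
  simp only [mul_sum, ← mul_assoc, thetaSum_mul_theta, sum_thetaSum]
  congr 1
  funext C
  simp only [mul_ite, mul_zero, mul_one, sum_ite_irrel, sum_const_zero, sum_ite_mem, univ_inter]
  have hcard : ∀ q ∈ C, ∀ p ∈ C.erase q, #((C.erase q).erase p) + 2 = #C := fun q hq p hp => by
    rw [← card_erase_add_one hq, ← card_erase_add_one hp]
  by_cases hC : #C = m + 2
  · have hlt : ∀ q, Iio q ∩ C.erase q = {p ∈ C | p < q} := fun q => by
      ext p
      simp only [mem_inter, mem_Iio, mem_erase, mem_filter]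
      exact ⟨fun ⟨hpq, _, hp⟩ => ⟨hp, hpq⟩, fun ⟨hp, hpq⟩ => ⟨hpq, hpq.ne, hp⟩⟩
    rw [if_pos hC, ← hC, ← sum_sum_neg_one_pow_card_filter_lt]
    refine sum_congr rfl fun q hq => ?_
    rw [hlt]
    refine sum_congr rfl fun p hp => ?_
    obtain ⟨hpC, hpq⟩ := mem_filter.mp hp
    rw [if_pos (by have := hcard q hq p (mem_erase.mpr ⟨hpq.ne, hpC⟩); omega), pow_add]
  · rw [if_neg hC]
    exact sum_eq_zero fun q hq => sum_eq_zero fun p hp => by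
      rw [if_neg (by have := hcard q hq p (mem_inter.mp hp).2; omega)]

lemma Fq_zero : Fq n 0 = 1 := by
  simp [Fq, thetaA]

lemma sum_theta_eq_Fq_one : ∑ i, theta n i = Fq n 1 := by
  simpa [Fq_zero] using Fq_mul_sum_theta (n := n) 0

lemma sum_theta_mul_theta_eq_Fq_two : ∑ q, ∑ p ∈ Iio q, theta n p * theta n q = Fq n 2 := by
  simpa [Fq_zero] using Fq_mul_sum_pairs (n := n) 0

lemma Fq_two_pow (k : ℕ) : Fq n 2 ^ k = (k ! : ℚ) • Fq n (2 * k) := by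
  induction k with
  | zero => simp [Fq_zero]
  | succ k ih =>
    rw [pow_succ, ih, smul_mul_assoc, ← sum_theta_mul_theta_eq_Fq_two, Fq_mul_sum_pairs,
      show (2 * k + 2) / 2 = k + 1 by omega, ← Nat.cast_smul_eq_nsmul ℚ, smul_smul,
      Nat.factorial_succ, Nat.cast_mul, mul_comm, mul_add_one 2 k]

lemma Fq_two_pow_mul_Fq_one (k : ℕ) : Fq n 2 ^ k * Fq n 1 = (k ! : ℚ) • Fq n (2 * k + 1) := by
  rw [Fq_two_pow, smul_mul_assoc, ← sum_theta_eq_Fq_one, Fq_mul_sum_theta,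
    if_neg (Nat.not_even_two_mul_add_one k), one_smul]

end ExteriorAlgebra

/-- For `n ≥ 2` and each `k ≥ 1`, there are nonzero rationals `a, a'` with
`a • F_{2k} = (F_2)^k` and `a' • F_{2k+1} = (F_2)^k F_1`; consequently the two-sided
ideal generated by `{F_r : 1 ≤ r ≤ n}` equals the one generated by `F_1` and `F_2`. -/
theorem stmt5 (n : ℕ) (hn : 2 ≤ n) :
    (∀ k : ℕ, 1 ≤ k → ∃ a a' : ℚ, a ≠ 0 ∧ a' ≠ 0 ∧
      a • Fq n (2 * k) = (Fq n 2) ^ k ∧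
      a' • Fq n (2 * k + 1) = (Fq n 2) ^ k * Fq n 1) ∧
    TwoSidedIdeal.span {x | ∃ r : ℕ, 1 ≤ r ∧ r ≤ n ∧ x = Fq n r}
      = TwoSidedIdeal.span {Fq n 1, Fq n 2} := by
  have hk : ∀ k : ℕ, (k ! : ℚ) ≠ 0 := fun k => by positivity
  refine ⟨fun k _ => ⟨k !, k !, hk k, hk k, (Fq_two_pow k).symm, (Fq_two_pow_mul_Fq_one k).symm⟩,
    le_antisymm ?_ ?_⟩
  · set I := TwoSidedIdeal.span ({Fq n 1, Fq n 2} : Set (ExteriorAlgebra ℚ (Fin n → ℚ)))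
    have hF1 : Fq n 1 ∈ I := TwoSidedIdeal.subset_span (Set.mem_insert _ _)
    have hF2 : Fq n 2 ∈ I := TwoSidedIdeal.subset_span (Set.mem_insert_of_mem _ rfl)
    rw [TwoSidedIdeal.span_le]
    rintro _ ⟨r, hr, -, rfl⟩
    obtain ⟨k, rfl | rfl⟩ := Nat.even_or_odd' r
    · obtain ⟨j, rfl⟩ : ∃ j, k = j + 1 := ⟨k - 1, by omega⟩
      rw [SetLike.mem_coe, ← inv_smul_smul₀ (hk (j + 1)) (Fq n _), ← Fq_two_pow, pow_succ,
        Algebra.smul_def, ← mul_assoc]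
      exact I.mul_mem_left _ _ hF2
    · rw [SetLike.mem_coe, ← inv_smul_smul₀ (hk k) (Fq n _), ← Fq_two_pow_mul_Fq_one,
        Algebra.smul_def, ← mul_assoc]
      exact I.mul_mem_left _ _ hF1
  · rw [TwoSidedIdeal.span_le]
    rintro _ (rfl | rfl)
    · exact TwoSidedIdeal.subset_span ⟨1, le_rfl, by omega, rfl⟩
    · exact TwoSidedIdeal.subset_span ⟨2, by norm_num, hn, rfl⟩
end
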